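/- arXiv:2401.16687 — 3 statements merged into one kernel-verified Lean document; each statement's English description precedes it below -/
import Mathlib

section
/- Let v ∈ R^d with d ≥ 1, and let S ⊆ {1,...,d} be a set of k indices with the k largest absolute values of coordinates of v (k ≤ d). Let top_S(v) denote v restricted to S (zero elsewhere). Then ‖v − top_S(v)‖² ≤ (1 − k/d)‖v‖². -/
/-!
Every squared coordinate outside `S` is at most every squared coordinate inside `S`, so the
average squared mass of `v` over `S` is at least its average over all `d` coordinates:
`(k / d) ‖v‖² ≤ ∑_{i ∈ S} v i²`. The discarded mass `‖v - top_S(v)‖² = ∑_{i ∉ S} v i²` is the rest.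
-/

open Finset

section TopSet

variable {ι M : Type*}

theorem Finset.card_nsmul_sum_le_card_nsmul_sum [AddCommMonoid M] [PartialOrder M]
    [IsOrderedAddMonoid M] {s t : Finset ι} {f : ι → M} (h : ∀ i ∈ s, ∀ j ∈ t, f j ≤ f i) :
    #s • ∑ j ∈ t, f j ≤ #t • ∑ i ∈ s, f i :=
  calc #s • ∑ j ∈ t, f j = ∑ j ∈ t, ∑ _i ∈ s, f j := by simp only [sum_const, smul_sum]
    _ ≤ ∑ j ∈ t, ∑ i ∈ s, f i := sum_le_sum fun j hj => sum_le_sum fun i hi => h i hi j hj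
    _ = #t • ∑ i ∈ s, f i := sum_const _

variable [Fintype ι] [DecidableEq ι]

theorem Finset.card_mul_sum_le_card_mul_sum_of_top [Semiring M] [PartialOrder M]
    [IsOrderedRing M] {s : Finset ι} {f : ι → M} (h : ∀ i ∈ s, ∀ j ∉ s, f j ≤ f i) :
    #s * ∑ i, f i ≤ Fintype.card ι * ∑ i ∈ s, f i := by
  have hcompl : #s • ∑ j ∈ sᶜ, f j ≤ #sᶜ • ∑ i ∈ s, f i :=
    card_nsmul_sum_le_card_nsmul_sum fun i hi j hj => h i hi j (mem_compl.mp hj)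
  rw [nsmul_eq_mul, nsmul_eq_mul] at hcompl
  calc (#s : M) * ∑ i, f i = #s * ∑ i ∈ s, f i + #s * ∑ j ∈ sᶜ, f j := by
        rw [← sum_add_sum_compl s, mul_add]
    _ ≤ #s * ∑ i ∈ s, f i + #sᶜ * ∑ i ∈ s, f i := by gcongr
    _ = Fintype.card ι * ∑ i ∈ s, f i := by
        rw [← add_mul, ← card_add_card_compl s, Nat.cast_add]

theorem Finset.sum_compl_le_one_sub_card_div_mul_sum [Field M] [LinearOrder M]
    [IsStrictOrderedRing M] {s : Finset ι} {f : ι → M} (h : ∀ i ∈ s, ∀ j ∉ s, f j ≤ f i) :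
    ∑ i ∈ sᶜ, f i ≤ (1 - #s / Fintype.card ι) * ∑ i, f i := by
  rcases isEmpty_or_nonempty ι with hι | hι
  · simp [eq_empty_of_isEmpty sᶜ]
  have hcard : (0 : M) < Fintype.card ι := by exact_mod_cast Fintype.card_pos
  have hmass : #s / Fintype.card ι * ∑ i, f i ≤ ∑ i ∈ s, f i := by
    rw [div_mul_eq_mul_div, div_le_iff₀ hcard, mul_comm _ (Fintype.card ι : M)]
    exact card_mul_sum_le_card_mul_sum_of_top h
  linarith [sum_add_sum_compl s f]

end TopSet

theorem EuclideanSpace.norm_sub_restrict_sq {ι : Type*} [Fintype ι] [DecidableEq ι]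
    (v : EuclideanSpace ℝ ι) (s : Finset ι) :
    ‖v - WithLp.toLp 2 (fun i => if i ∈ s then v i else 0)‖ ^ 2 = ∑ i ∈ sᶜ, v i ^ 2 := by
  rw [EuclideanSpace.real_norm_sq_eq, ← sum_compl_add_sum s,
    sum_eq_zero (s := s) fun i hi => by simp [hi], add_zero]
  exact sum_congr rfl fun i hi => by simp [mem_compl.mp hi]

theorem topk_contraction_general {d k : ℕ}
    (v : EuclideanSpace ℝ (Fin d)) (S : Finset (Fin d)) (hcard : S.card = k)
    (htop : ∀ i ∈ S, ∀ j ∉ S, |v j| ≤ |v i|) :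
    ‖v - (show EuclideanSpace ℝ (Fin d) from WithLp.toLp 2 (fun i => if i ∈ S then v i else 0))‖ ^ 2 ≤
      (1 - (k : ℝ) / d) * ‖v‖ ^ 2 := by
  have hsq : ∀ i ∈ S, ∀ j ∉ S, v j ^ 2 ≤ v i ^ 2 := fun i hi j hj => sq_le_sq.mpr (htop i hi j hj)
  have hbound := sum_compl_le_one_sub_card_div_mul_sum hsq
  rw [Fintype.card_fin, hcard] at hbound
  rwa [EuclideanSpace.norm_sub_restrict_sq, EuclideanSpace.real_norm_sq_eq]

/-- Top-k compressor contraction bound: `‖v − top_S(v)‖² ≤ (1 − k/d)‖v‖²`. -/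
theorem topk_contraction {d k : ℕ} (hd : 1 ≤ d) (hk : k ≤ d)
    (v : EuclideanSpace ℝ (Fin d)) (S : Finset (Fin d)) (hcard : S.card = k)
    (htop : ∀ i ∈ S, ∀ j ∉ S, |v j| ≤ |v i|) :
    ‖v - (show EuclideanSpace ℝ (Fin d) from WithLp.toLp 2 (fun i => if i ∈ S then v i else 0))‖ ^ 2 ≤
      (1 - (k : ℝ) / d) * ‖v‖ ^ 2 :=
  topk_contraction_general v S hcard htop
end

section
/- With the same setup as the top-k contraction bound: if S is a set of the k largest-magnitude coordinates of v ∈ R^d, then ‖top_S(v)‖ ≥ (1 − √(1 − k/d))‖v‖. -/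
/-!
Every kept coordinate dominates every dropped one, so averaging over the `k × (d - k)` pairs gives
`k ‖v - top_S v‖² ≤ (d - k) ‖top_S v‖²`, i.e. `‖v - top_S v‖ ≤ √(1 - k/d) ‖v‖`. The triangle
inequality `‖v‖ ≤ ‖top_S v‖ + ‖v - top_S v‖` then gives the lower bound.
-/

open Finset

theorem Finset.card_mul_sum_le_card_mul_sum {ι R : Type*} [CommSemiring R] [PartialOrder R]
    [IsOrderedRing R] {s t : Finset ι} {f : ι → R} (h : ∀ i ∈ s, ∀ j ∈ t, f j ≤ f i) :
    #s * ∑ j ∈ t, f j ≤ #t * ∑ i ∈ s, f i :=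
  calc (#s : R) * ∑ j ∈ t, f j = ∑ i ∈ s, ∑ j ∈ t, f j := by rw [sum_const, nsmul_eq_mul]
    _ ≤ ∑ i ∈ s, ∑ j ∈ t, f i := sum_le_sum fun i hi => sum_le_sum fun j hj => h i hi j hj
    _ = #t * ∑ i ∈ s, f i := by rw [mul_sum]; simp only [sum_const, nsmul_eq_mul]

namespace EuclideanSpace

variable {ι : Type*} [Fintype ι] [DecidableEq ι]

/-- The vector `top_S v`. -/
noncomputable def restrictTo (S : Finset ι) (v : EuclideanSpace ℝ ι) : EuclideanSpace ℝ ι :=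
  WithLp.toLp 2 fun i => if i ∈ S then v i else 0

section

variable (S : Finset ι) (v : EuclideanSpace ℝ ι)

theorem norm_sq_eq_sum_add_sum_compl : ‖v‖ ^ 2 = ∑ i ∈ S, v i ^ 2 + ∑ i ∈ Sᶜ, v i ^ 2 := by
  rw [real_norm_sq_eq, sum_add_sum_compl]

theorem norm_sq_sub_restrictTo : ‖v - restrictTo S v‖ ^ 2 = ∑ i ∈ Sᶜ, v i ^ 2 := by
  have hS : ∑ i ∈ S, (v - restrictTo S v) i ^ 2 = 0 :=
    sum_eq_zero fun i hi => by simp [restrictTo, hi]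
  rw [real_norm_sq_eq, ← sum_compl_add_sum S, hS, add_zero]
  exact sum_congr rfl fun i hi => by simp [restrictTo, mem_compl.mp hi]

end

variable {S : Finset ι} {v : EuclideanSpace ℝ ι}

theorem card_mul_norm_sq_sub_restrictTo_le (htop : ∀ i ∈ S, ∀ j ∉ S, |v j| ≤ |v i|) :
    Fintype.card ι * ‖v - restrictTo S v‖ ^ 2 ≤ (Fintype.card ι - #S) * ‖v‖ ^ 2 := by
  have hpairs : #S * ∑ j ∈ Sᶜ, v j ^ 2 ≤ (Fintype.card ι - #S) * ∑ i ∈ S, v i ^ 2 := by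
    have := card_mul_sum_le_card_mul_sum (s := S) (t := Sᶜ) (f := fun i => v i ^ 2)
      fun i hi j hj => sq_le_sq.mpr (htop i hi j (mem_compl.mp hj))
    rwa [card_compl, Nat.cast_sub (card_le_univ S)] at this
  rw [norm_sq_sub_restrictTo, norm_sq_eq_sum_add_sum_compl S]
  linarith

theorem norm_sub_restrictTo_le (htop : ∀ i ∈ S, ∀ j ∉ S, |v j| ≤ |v i|) :
    ‖v - restrictTo S v‖ ≤ √(1 - #S / Fintype.card ι) * ‖v‖ := by
  obtain hn | hn := (Fintype.card ι).eq_zero_or_pos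
  · have : IsEmpty ι := Fintype.card_eq_zero_iff.mp hn
    simp [Subsingleton.elim (v - restrictTo S v) 0]
  rw [← Real.sqrt_sq (norm_nonneg v), ← Real.sqrt_mul' _ (sq_nonneg _)]
  apply Real.le_sqrt_of_sq_le
  rw [one_sub_div (by positivity), div_mul_eq_mul_div, le_div_iff₀ (by positivity)]
  linarith [card_mul_norm_sq_sub_restrictTo_le htop]

end EuclideanSpace

theorem topk_lower_bound_general {d k : ℕ}
    (v : EuclideanSpace ℝ (Fin d)) (S : Finset (Fin d)) (hcard : S.card = k)
    (htop : ∀ i ∈ S, ∀ j ∉ S, |v j| ≤ |v i|) :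
    ‖(show EuclideanSpace ℝ (Fin d) from WithLp.toLp 2 (fun i => if i ∈ S then v i else 0))‖ ≥
      (1 - Real.sqrt (1 - (k : ℝ) / d)) * ‖v‖ := by
  set top := EuclideanSpace.restrictTo S v
  have hcontract := EuclideanSpace.norm_sub_restrictTo_le htop
  rw [Fintype.card_fin, hcard] at hcontract
  have htri : ‖v‖ ≤ ‖top‖ + ‖v - top‖ := norm_le_norm_add_norm_sub' v top
  change ‖top‖ ≥ _
  linarith

/-- Top-k lower bound: `‖top_S(v)‖ ≥ (1 − √(1 − k/d))‖v‖`. -/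
theorem topk_lower_bound {d k : ℕ} (hd : 1 ≤ d) (hk : k ≤ d)
    (v : EuclideanSpace ℝ (Fin d)) (S : Finset (Fin d)) (hcard : S.card = k)
    (htop : ∀ i ∈ S, ∀ j ∉ S, |v j| ≤ |v i|) :
    ‖(show EuclideanSpace ℝ (Fin d) from WithLp.toLp 2 (fun i => if i ∈ S then v i else 0))‖ ≥
      (1 - Real.sqrt (1 - (k : ℝ) / d)) * ‖v‖ :=
  topk_lower_bound_general v S hcard htop
end

section
/- Suppose a compressor C: R^d → R^d satisfies ‖x − C(x)‖ ≤ √γ‖x‖ for all x, where γ ∈ (0,1). Define error-feedback iterates: e_0 = 0, P_t = g_t + e_t, e_{t+1} = P_t − C(P_t), where ‖g_t‖ ≤ G for all t. Then for all t, ‖e_t‖² ≤ 3γ(2+γ)G²/(2(1−γ)²). -/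
/-!
With `1 + a = (2 + γ) / (3 γ)`, Young's inequality `‖g + e‖² ≤ (1 + a⁻¹) ‖g‖² + (1 + a) ‖e‖²`
turns the contraction property into the linear recursion
`‖e_{t+1}‖² ≤ γ (1 + a) ‖e_t‖² + γ (1 + a⁻¹) G²` with rate `γ (1 + a) = (2 + γ) / 3 < 1`.
The claimed bound is exactly its fixed point, so it is preserved by induction.
-/

lemma le_of_succ_le_mul_add {α : Type*} [Semiring α] [PartialOrder α] [IsOrderedRing α]
    {u : ℕ → α} {ρ c B : α} (hρ : 0 ≤ ρ) (hB : ρ * B + c ≤ B) (h0 : u 0 ≤ B)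
    (hstep : ∀ t, u (t + 1) ≤ ρ * u t + c) (t : ℕ) : u t ≤ B := by
  induction t with
  | zero => exact h0
  | succ t ih =>
    calc u (t + 1) ≤ ρ * u t + c := hstep t
      _ ≤ ρ * B + c := by gcongr
      _ ≤ B := hB

lemma norm_add_sq_le_of_pos {E : Type*} [SeminormedAddGroup E] (x y : E) {a : ℝ} (ha : 0 < a) :
    ‖x + y‖ ^ 2 ≤ (1 + a⁻¹) * ‖x‖ ^ 2 + (1 + a) * ‖y‖ ^ 2 := by
  have young := two_mul_le_add_mul_sq (a := ‖y‖) (b := ‖x‖) ha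
  calc ‖x + y‖ ^ 2 ≤ (‖x‖ + ‖y‖) ^ 2 := by gcongr; exact norm_add_le x y
    _ = ‖x‖ ^ 2 + 2 * ‖y‖ * ‖x‖ + ‖y‖ ^ 2 := by ring
    _ ≤ (1 + a⁻¹) * ‖x‖ ^ 2 + (1 + a) * ‖y‖ ^ 2 := by linarith

lemma norm_sq_le_of_norm_le_sqrt_mul {E F : Type*} [SeminormedAddGroup E] [SeminormedAddGroup F]
    {x : E} {y : F} {γ : ℝ} (hγ : 0 ≤ γ) (h : ‖x‖ ≤ √γ * ‖y‖) : ‖x‖ ^ 2 ≤ γ * ‖y‖ ^ 2 := by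
  calc ‖x‖ ^ 2 ≤ (√γ * ‖y‖) ^ 2 := by gcongr
    _ = γ * ‖y‖ ^ 2 := by rw [mul_pow, Real.sq_sqrt hγ]

theorem error_feedback_bound_general {d : ℕ}
    (C : EuclideanSpace ℝ (Fin d) → EuclideanSpace ℝ (Fin d))
    (γ G : ℝ) (hγ0 : 0 < γ) (hγ1 : γ < 1)
    (hC : ∀ x, ‖x - C x‖ ≤ Real.sqrt γ * ‖x‖)
    (g e : ℕ → EuclideanSpace ℝ (Fin d))
    (hg : ∀ t, ‖g t‖ ≤ G)
    (he0 : e 0 = 0)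
    (herec : ∀ t, e (t + 1) = (g t + e t) - C (g t + e t)) :
    ∀ t, ‖e t‖ ^ 2 ≤ 3 * γ * (2 + γ) * G ^ 2 / (2 * (1 - γ) ^ 2) := by
  set a := 2 * (1 - γ) / (3 * γ)
  have ha : 0 < a := div_pos (by linarith) (by positivity)
  have h1γ : 1 - γ ≠ 0 := by linarith
  refine le_of_succ_le_mul_add (ρ := γ * (1 + a)) (c := γ * (1 + a⁻¹) * G ^ 2)
    (by positivity) (le_of_eq ?_) (by simp [he0]; positivity) fun t ↦ ?_
  · simp only [a]
    field_simp
    ring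
  calc ‖e (t + 1)‖ ^ 2 ≤ γ * ‖g t + e t‖ ^ 2 :=
        norm_sq_le_of_norm_le_sqrt_mul hγ0.le (herec t ▸ hC _)
    _ ≤ γ * ((1 + a⁻¹) * ‖g t‖ ^ 2 + (1 + a) * ‖e t‖ ^ 2) := by
        gcongr; exact norm_add_sq_le_of_pos _ _ ha
    _ ≤ γ * ((1 + a⁻¹) * G ^ 2 + (1 + a) * ‖e t‖ ^ 2) := by gcongr; exact hg t
    _ = γ * (1 + a) * ‖e t‖ ^ 2 + γ * (1 + a⁻¹) * G ^ 2 := by ring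

/-- Error-feedback with a `γ`-contractive compressor has uniformly bounded error:
`‖e_t‖² ≤ 3γ(2+γ)G²/(2(1−γ)²)`. -/
theorem error_feedback_bound {d : ℕ}
    (C : EuclideanSpace ℝ (Fin d) → EuclideanSpace ℝ (Fin d))
    (γ G : ℝ) (hγ0 : 0 < γ) (hγ1 : γ < 1) (hG : 0 < G)
    (hC : ∀ x, ‖x - C x‖ ≤ Real.sqrt γ * ‖x‖)
    (g e : ℕ → EuclideanSpace ℝ (Fin d))
    (hg : ∀ t, ‖g t‖ ≤ G)
    (he0 : e 0 = 0)
    (herec : ∀ t, e (t + 1) = (g t + e t) - C (g t + e t)) :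
    ∀ t, ‖e t‖ ^ 2 ≤ 3 * γ * (2 + γ) * G ^ 2 / (2 * (1 - γ) ^ 2) :=
  error_feedback_bound_general C γ G hγ0 hγ1 hC g e hg he0 herec
end
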